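/- The map t = (t_1,…,t_N) ↦ η(t) is differentiable on [0,∞)^N and its Jacobian determinant satisfies det(∂η/∂(t_1,…,t_N))(t) = λ^N (v*)^N ∏_{k=1}^N e^{−λ(s_N − s_{k−1})} for every t; in particular the Jacobian determinant is strictly positive for all t_1,…,t_N, so it never vanishes. -/

import Mathlib

/-! Writing `E_i(t) = exp(-λ (t_i + ⋯ + t_N))`, the affine flow and the jumps unroll to
`η^j = v* - v* E_j + ∑_{i > j} W_{i→j} E_i`: the value `0` given to particle `j` at its own jump
decays towards `v*`, and each later jump adds a weight that decays from then on. Since `E_i`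
depends only on `t_i, …, t_N`, the Jacobian is upper triangular with diagonal `λ v* E_j`. -/

noncomputable section

/-- The explicit coordinatewise flow `γ_t(x)^j = e^{-λt} x^j + (1-e^{-λt}) v*` of the drift
`b^j(x) = -λ(x^j - v*)`. -/
def neuronFlow (N : ℕ) (lam vstar : ℝ) (t : ℝ) (x : Fin N → ℝ) : Fin N → ℝ :=
  fun j => Real.exp (-(lam * t)) * x j + (1 - Real.exp (-(lam * t))) * vstar

/-- The jump map `Δ_i` (with 1-based index `i`) : coordinate `i` is reset to `0` and every
other coordinate `j` receives the weight `W_{i→j}`. -/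
def neuronJump (N : ℕ) (W : ℕ → ℕ → ℝ) (i : ℕ) (x : Fin N → ℝ) : Fin N → ℝ :=
  fun j => if (j : ℕ) + 1 = i then 0 else x j + W i ((j : ℕ) + 1)

/-- `neuronChain N lam vstar W y t k = x_k`, where `x_0 = Δ_1(y)` and
`x_k = Δ_{k+1}(γ_{t_k}(x_{k-1}))` (particles jump in the order `1, 2, …, N`); the time
vector is 0-indexed, i.e. `t k` stands for `t_{k+1}`. -/
def neuronChain (N : ℕ) (lam vstar : ℝ) (W : ℕ → ℕ → ℝ) (y : Fin N → ℝ)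
    (t : ℕ → ℝ) : ℕ → (Fin N → ℝ)
  | 0 => neuronJump N W 1 y
  | k + 1 =>
      neuronJump N W (k + 2) (neuronFlow N lam vstar (t k) (neuronChain N lam vstar W y t k))

/-- `η(t) = γ_{t_N}(x_{N-1})`, as a function of the full time vector `t = (t_1,…,t_N)`
(here `t j` stands for `t_{j+1}`). -/
def neuronEta (N : ℕ) (lam vstar : ℝ) (W : ℕ → ℕ → ℝ) (y : Fin N → ℝ)
    (t : Fin N → ℝ) : Fin N → ℝ :=
  neuronFlow N lam vstar ((fun k => if h : k < N then t ⟨k, h⟩ else 0) (N - 1))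
    (neuronChain N lam vstar W y (fun k => if h : k < N then t ⟨k, h⟩ else 0) (N - 1))

open Finset

def tailSum (N k : ℕ) : (Fin N → ℝ) →L[ℝ] ℝ :=
  ∑ m ∈ univ.filter (fun m : Fin N => k ≤ (m : ℕ)), ContinuousLinearMap.proj m

lemma tailSum_apply (N k : ℕ) (t : Fin N → ℝ) :
    tailSum N k t = ∑ m ∈ univ.filter (fun m : Fin N => k ≤ (m : ℕ)), t m := by
  simp [tailSum]

lemma tailSum_apply_single (N k : ℕ) (q : Fin N) :
    tailSum N k (Pi.single q 1) = if k ≤ (q : ℕ) then 1 else 0 := by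
  simp [tailSum_apply, Pi.single_apply]

lemma tailSum_apply_eq_sub (N k : ℕ) (t : Fin N → ℝ) :
    tailSum N k t = (∑ m, t m) - ∑ m ∈ univ.filter (fun m : Fin N => (m : ℕ) < k), t m := by
  rw [tailSum_apply, eq_sub_iff_add_eq,
    ← sum_filter_add_sum_filter_not univ (fun m : Fin N => (m : ℕ) < k)]
  simp only [not_lt, add_comm]

lemma sum_Ico_extend_eq_tailSum (N k : ℕ) (t : Fin N → ℝ) :
    ∑ m ∈ Ico k N, (if h : m < N then t ⟨m, h⟩ else 0) = tailSum N k t := by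
  set g : ℕ → ℝ := fun m => if h : m < N then t ⟨m, h⟩ else 0
  calc ∑ m ∈ Ico k N, g m = ∑ m ∈ range N, if k ≤ m then g m else 0 := by
        rw [← sum_filter]
        congr 1
        ext m
        simp [and_comm]
    _ = ∑ m : Fin N, if k ≤ (m : ℕ) then g m else 0 := (Fin.sum_univ_eq_sum_range _ _).symm
    _ = tailSum N k t := by simp [g, tailSum_apply, sum_filter]

lemma exp_neg_mul_sum_Ico_succ_top (lam : ℝ) (τ : ℕ → ℝ) {i k : ℕ} (h : i ≤ k) :
    Real.exp (-(lam * ∑ m ∈ Ico i (k + 1), τ m)) =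
      Real.exp (-(lam * ∑ m ∈ Ico i k, τ m)) * Real.exp (-(lam * τ k)) := by
  rw [sum_Ico_succ_top h, ← Real.exp_add]
  ring_nf

section Chain

variable (N : ℕ) (lam vstar : ℝ) (W : ℕ → ℕ → ℝ) (y : Fin N → ℝ) (τ : ℕ → ℝ)

lemma neuronChain_apply_self (j : Fin N) : neuronChain N lam vstar W y τ j j = 0 := by
  obtain ⟨_ | k, _⟩ := j <;> simp [neuronChain, neuronJump]

lemma neuronChain_succ_apply_of_le {j : Fin N} {k : ℕ} (hjk : (j : ℕ) ≤ k) :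
    neuronChain N lam vstar W y τ (k + 1) j =
      neuronFlow N lam vstar (τ k) (neuronChain N lam vstar W y τ k) j + W (k + 2) (j + 1) := by
  simp [neuronChain, neuronJump, show (j : ℕ) ≠ k + 1 by omega]

lemma neuronFlow_neuronChain_apply (j : Fin N) {k : ℕ} (hjk : (j : ℕ) ≤ k) :
    neuronFlow N lam vstar (τ k) (neuronChain N lam vstar W y τ k) j =
      vstar - vstar * Real.exp (-(lam * ∑ m ∈ Ico (j : ℕ) (k + 1), τ m)) +
        ∑ i ∈ Ioc (j : ℕ) k, W (i + 1) (j + 1) *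
          Real.exp (-(lam * ∑ m ∈ Ico i (k + 1), τ m)) := by
  induction k, hjk using Nat.le_induction with
  | base => simp [neuronFlow, neuronChain_apply_self]; ring
  | succ k hjk ih =>
    have hdecay : ∀ i ∈ Ioc (j : ℕ) k,
        W (i + 1) (j + 1) * Real.exp (-(lam * ∑ m ∈ Ico i (k + 2), τ m)) =
          Real.exp (-(lam * τ (k + 1))) *
            (W (i + 1) (j + 1) * Real.exp (-(lam * ∑ m ∈ Ico i (k + 1), τ m))) := by
      intro i hi
      rw [exp_neg_mul_sum_Ico_succ_top lam τ (by grind)]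
      ring
    rw [show neuronFlow N lam vstar (τ (k + 1)) (neuronChain N lam vstar W y τ (k + 1)) j =
        Real.exp (-(lam * τ (k + 1))) * neuronChain N lam vstar W y τ (k + 1) j +
          (1 - Real.exp (-(lam * τ (k + 1)))) * vstar from rfl,
      neuronChain_succ_apply_of_le N lam vstar W y τ hjk, ih, sum_Ioc_succ_top (by omega),
      exp_neg_mul_sum_Ico_succ_top lam τ (i := j) (k := k + 1) (by omega), sum_congr rfl hdecay,
      ← mul_sum, Nat.Ico_succ_singleton, sum_singleton]
    ring

end Chain

lemma neuronEta_apply (N : ℕ) (lam vstar : ℝ) (W : ℕ → ℕ → ℝ) (y : Fin N → ℝ)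
    (t : Fin N → ℝ) (j : Fin N) :
    neuronEta N lam vstar W y t j =
      vstar - vstar * Real.exp (-(lam * tailSum N j t)) +
        ∑ i ∈ Ioc (j : ℕ) (N - 1), W (i + 1) (j + 1) * Real.exp (-(lam * tailSum N i t)) := by
  obtain ⟨M, rfl⟩ : ∃ M, N = M + 1 := ⟨N - 1, by have := j.pos; omega⟩
  refine (neuronFlow_neuronChain_apply (M + 1) lam vstar W y
    (fun k => if h : k < M + 1 then t ⟨k, h⟩ else 0) j (k := M) (by omega)).trans ?_
  simp only [sum_Ico_extend_eq_tailSum, Nat.add_sub_cancel]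

lemma hasFDerivAt_exp_neg_mul_tailSum (N k : ℕ) (lam : ℝ) (t : Fin N → ℝ) :
    HasFDerivAt (fun t => Real.exp (-(lam * tailSum N k t)))
      ((-lam * Real.exp (-(lam * tailSum N k t))) • tailSum N k) t :=
  (((tailSum N k).hasFDerivAt.const_mul lam).neg.exp).congr_fderiv <| by
    ext; simp; ring

def neuronEtaDeriv (N : ℕ) (lam vstar : ℝ) (W : ℕ → ℕ → ℝ) (t : Fin N → ℝ) :
    (Fin N → ℝ) →L[ℝ] (Fin N → ℝ) :=
  ContinuousLinearMap.pi fun j : Fin N =>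
    lam • ((vstar * Real.exp (-(lam * tailSum N j t))) • tailSum N j -
      ∑ i ∈ Ioc (j : ℕ) (N - 1),
        (W (i + 1) (j + 1) * Real.exp (-(lam * tailSum N i t))) • tailSum N i)

lemma hasFDerivAt_neuronEta (N : ℕ) (lam vstar : ℝ) (W : ℕ → ℕ → ℝ) (y : Fin N → ℝ)
    (t : Fin N → ℝ) :
    HasFDerivAt (neuronEta N lam vstar W y) (neuronEtaDeriv N lam vstar W t) t := by
  rw [show neuronEta N lam vstar W y = _ from funext₂ (neuronEta_apply N lam vstar W y)]
  refine hasFDerivAt_pi.2 fun j => ?_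
  have hE := (hasFDerivAt_exp_neg_mul_tailSum N · lam t)
  refine ((((hE j).const_mul vstar).const_sub vstar).add
    (HasFDerivAt.fun_sum fun i _ => (hE i).const_mul _)).congr_fderiv ?_
  ext
  simp [mul_sub, mul_sum]
  ring_nf

lemma neuronEtaDeriv_apply_single (N : ℕ) (lam vstar : ℝ) (W : ℕ → ℕ → ℝ) (t : Fin N → ℝ)
    (p q : Fin N) :
    neuronEtaDeriv N lam vstar W t (Pi.single q 1) p =
      lam * (vstar * Real.exp (-(lam * tailSum N p t)) * (if (p : ℕ) ≤ q then 1 else 0) -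
        ∑ i ∈ Ioc (p : ℕ) (N - 1),
          W (i + 1) (p + 1) * Real.exp (-(lam * tailSum N i t)) * (if i ≤ q then 1 else 0)) := by
  simp [neuronEtaDeriv, tailSum_apply_single]

lemma det_neuronEtaDeriv (N : ℕ) (lam vstar : ℝ) (W : ℕ → ℕ → ℝ) (t : Fin N → ℝ) :
    LinearMap.det (neuronEtaDeriv N lam vstar W t : (Fin N → ℝ) →ₗ[ℝ] (Fin N → ℝ)) =
      ∏ j : Fin N, lam * vstar * Real.exp (-(lam * tailSum N j t)) := by
  rw [← LinearMap.det_toMatrix', Matrix.det_of_isUpperTriangular]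
  · refine prod_congr rfl fun p _ => ?_
    rw [LinearMap.toMatrix'_apply, ContinuousLinearMap.coe_coe, neuronEtaDeriv_apply_single,
      sum_eq_zero fun i hi => by grind]
    simp; ring
  · intro p q hqp
    rw [LinearMap.toMatrix'_apply, ContinuousLinearMap.coe_coe, neuronEtaDeriv_apply_single,
      sum_eq_zero fun i hi => by grind]
    simp [show ¬p ≤ q from not_le.2 hqp]

theorem neuronEta_jacobian_det_general
    (N : ℕ) (lam vstar : ℝ) (hlam : 0 < lam) (hvstar : 0 < vstar)
    (W : ℕ → ℕ → ℝ) (y : Fin N → ℝ) :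
    ∀ t : Fin N → ℝ, (∀ k, 0 ≤ t k) →
      DifferentiableAt ℝ (neuronEta N lam vstar W y) t ∧
      LinearMap.det ((fderiv ℝ (neuronEta N lam vstar W y) t) :
          (Fin N → ℝ) →ₗ[ℝ] (Fin N → ℝ))
        = lam ^ N * vstar ^ N *
            ∏ k ∈ Finset.range N,
              Real.exp (-(lam * ((∑ j, t j) -
                ∑ j ∈ Finset.univ.filter (fun j : Fin N => (j : ℕ) < k), t j))) ∧
      0 < LinearMap.det ((fderiv ℝ (neuronEta N lam vstar W y) t) :
          (Fin N → ℝ) →ₗ[ℝ] (Fin N → ℝ)) := by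
  intro t _
  have hη := hasFDerivAt_neuronEta N lam vstar W y t
  have hdet : LinearMap.det
      (fderiv ℝ (neuronEta N lam vstar W y) t : (Fin N → ℝ) →ₗ[ℝ] (Fin N → ℝ)) =
        lam ^ N * vstar ^ N * ∏ k ∈ range N, Real.exp (-(lam * ((∑ j, t j) -
          ∑ j ∈ univ.filter (fun j : Fin N => (j : ℕ) < k), t j))) := by
    rw [hη.fderiv, det_neuronEtaDeriv, prod_mul_distrib, prod_mul_distrib,
      ← Fin.prod_univ_eq_prod_range]
    simp [tailSum_apply_eq_sub]
  exact ⟨hη.differentiableAt, hdet, hdet ▸ by positivity⟩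

/-- the map `t ↦ η(t)` is differentiable on `[0,∞)^N` and its Jacobian
determinant equals `λ^N (v*)^N ∏_{k=1}^N e^{-λ(s_N - s_{k-1})}` where `s_k = t_1 + ⋯ + t_k`;
in particular it is strictly positive, hence never vanishes. -/
theorem neuronEta_jacobian_det
    (N : ℕ) (hN : 1 ≤ N) (lam vstar : ℝ) (hlam : 0 < lam) (hvstar : 0 < vstar)
    (W : ℕ → ℕ → ℝ) (hW : ∀ i j, 0 ≤ W i j) (y : Fin N → ℝ) :
    ∀ t : Fin N → ℝ, (∀ k, 0 ≤ t k) →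
      DifferentiableAt ℝ (neuronEta N lam vstar W y) t ∧
      LinearMap.det ((fderiv ℝ (neuronEta N lam vstar W y) t) :
          (Fin N → ℝ) →ₗ[ℝ] (Fin N → ℝ))
        = lam ^ N * vstar ^ N *
            ∏ k ∈ Finset.range N,
              Real.exp (-(lam * ((∑ j, t j) -
                ∑ j ∈ Finset.univ.filter (fun j : Fin N => (j : ℕ) < k), t j))) ∧
      0 < LinearMap.det ((fderiv ℝ (neuronEta N lam vstar W y) t) :
          (Fin N → ℝ) →ₗ[ℝ] (Fin N → ℝ)) :=
  neuronEta_jacobian_det_general N lam vstar hlam hvstar W y
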